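/- Let C be a shortest even hole of a graph G, let u and v be distinct vertices of C, let the uv-path P of G be a C-shallow worst C-shortcut, and let C1, C2 be the uv-paths of C with ‖C1‖ ≤ ‖C2‖. Let x (respectively, y) be the neighbor of u (respectively, v) in C1. Then every shortest xy-path P_xy of G satisfies ‖P_xy‖ = ‖C1‖ − 2 and G[P_xy ∪ C2] is a shortest even hole of G. -/

import Mathlib

open SimpleGraph

variable {V : Type*}

/-- The vertex set of a walk. -/
def suppSet {G : SimpleGraph V} {u v : V} (w : G.Walk u v) : Set V :=
  {x | x ∈ w.support}

/-- An induced cycle of `G`. -/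
def IsInducedCycle (G : SimpleGraph V) {r : V} (w : G.Walk r r) : Prop :=
  w.IsCycle ∧ ∀ a b : V, a ∈ w.support → b ∈ w.support → G.Adj a b → s(a, b) ∈ w.edges

/-- A hole of `G`: an induced cycle with at least 4 vertices. -/
def IsHole (G : SimpleGraph V) {r : V} (w : G.Walk r r) : Prop :=
  IsInducedCycle G w ∧ 4 ≤ w.length

/-- An even hole of `G`. -/
def IsEvenHole (G : SimpleGraph V) {r : V} (w : G.Walk r r) : Prop :=
  IsHole G w ∧ Even w.length

/-- A shortest even hole of `G`. -/
def IsShortestEvenHole (G : SimpleGraph V) {r : V} (w : G.Walk r r) : Prop :=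
  IsEvenHole G w ∧ ∀ (y : V) (w' : G.Walk y y), IsEvenHole G w' → w.length ≤ w'.length

/-- `P` is a path of `G` all of whose edges lie on the walk `c`
(used for "a `uv`-path of `C`"). -/
def IsPathOf (G : SimpleGraph V) {p q u v : V} (c : G.Walk p q) (P : G.Walk u v) : Prop :=
  P.IsPath ∧ ∀ e ∈ P.edges, e ∈ c.edges

/-- The distance `d_C(u,v)` between `u` and `v` within the cycle `c`. -/
noncomputable def cycleDist (G : SimpleGraph V) {r : V} (c : G.Walk r r) (u v : V) : ℕ :=
  sInf {n | ∃ P : G.Walk u v, IsPathOf G c P ∧ P.length = n}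

/-- The induced subgraph `G[S]` is a hole of `G`. -/
def IsHoleOn (G : SimpleGraph V) (S : Set V) : Prop :=
  ∃ (r : V) (w : G.Walk r r), IsHole G w ∧ suppSet w = S

/-- The induced subgraph `G[S]` is an even hole of `G`. -/
def IsEvenHoleOn (G : SimpleGraph V) (S : Set V) : Prop :=
  ∃ (r : V) (w : G.Walk r r), IsEvenHole G w ∧ suppSet w = S

/-- The induced subgraph `G[S]` is a shortest even hole of `G`. -/
def IsShortestEvenHoleOn (G : SimpleGraph V) (S : Set V) : Prop :=
  ∃ (r : V) (w : G.Walk r r), IsShortestEvenHole G w ∧ suppSet w = S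

/-- `P` is `C`-good: the union of `P` and one of the two `uv`-paths of `C`
is again a shortest even hole of `G`. -/
def CGood (G : SimpleGraph V) {r u v : V} (c : G.Walk r r) (P : G.Walk u v) : Prop :=
  ∃ Q : G.Walk u v, IsPathOf G c Q ∧ IsShortestEvenHoleOn G (suppSet P ∪ suppSet Q)

/-- The standing assumptions for `C`-shortcuts: `P` is a `uv`-path of `G` for distinct
nonadjacent vertices `u`, `v` of `C`. -/
def ShortcutSetup (G : SimpleGraph V) {r u v : V} (c : G.Walk r r) (P : G.Walk u v) : Prop :=
  P.IsPath ∧ u ≠ v ∧ ¬G.Adj u v ∧ u ∈ c.support ∧ v ∈ c.support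

/-- `P` is a `C`-shortcut: `2 ≤ ‖P‖ ≤ d_C(u,v)` and `‖P‖ < ‖C‖/4`. -/
def CShortcut (G : SimpleGraph V) {r u v : V} (c : G.Walk r r) (P : G.Walk u v) : Prop :=
  2 ≤ P.length ∧ P.length ≤ cycleDist G c u v ∧ 4 * P.length < c.length

/-- `C1` and `C2` are the two `uv`-paths of the cycle `c`. -/
def ArcPair (G : SimpleGraph V) {r u v : V} (c : G.Walk r r) (C1 C2 : G.Walk u v) : Prop :=
  IsPathOf G c C1 ∧ IsPathOf G c C2 ∧ C1.length + C2.length = c.length ∧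
    ∀ e ∈ c.edges, e ∈ C1.edges ∨ e ∈ C2.edges

/-- `P` is `C`-shallow: `‖P‖ ≥ d_C(u,v) − 1` and `G[P ∪ C2]` is a hole, where `C2` is the
longer of the two `uv`-paths of `C`. -/
def CShallow (G : SimpleGraph V) {r u v : V} (c : G.Walk r r) (P : G.Walk u v) : Prop :=
  cycleDist G c u v - 1 ≤ P.length ∧
    ∀ C1 C2 : G.Walk u v, ArcPair G c C1 C2 → C1.length ≤ C2.length →
      IsHoleOn G (suppSet P ∪ suppSet C2)

/-- `P` is a worst `C`-shortcut. -/
def WorstCShortcut (G : SimpleGraph V) {r u v : V} (c : G.Walk r r) (P : G.Walk u v) : Prop :=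
  ShortcutSetup G c P ∧ CShortcut G c P ∧ ¬CGood G c P ∧
    ∀ (u' v' : V) (P' : G.Walk u' v'),
      ShortcutSetup G c P' → CShortcut G c P' → ¬CGood G c P' →
        (P.length < P'.length ∨
          (P.length = P'.length ∧ cycleDist G c u' v' ≤ cycleDist G c u v))

/-- `C` is good in `G`: every `C`-shortcut is `C`-good. -/
def GoodHole (G : SimpleGraph V) {r : V} (c : G.Walk r r) : Prop :=
  ∀ (u v : V) (P : G.Walk u v), ShortcutSetup G c P → CShortcut G c P → CGood G c P

/-- `P` is a shortest `uv`-path of `G`. -/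
def IsShortestPath (G : SimpleGraph V) {u v : V} (P : G.Walk u v) : Prop :=
  P.IsPath ∧ ∀ Q : G.Walk u v, P.length ≤ Q.length

/-- The closed neighborhood `N_G[S]` of a vertex set `S`. -/
def closedNbhd (G : SimpleGraph V) (S : Set V) : Set V :=
  S ∪ {x | ∃ y ∈ S, G.Adj y x}

/-- The subgraph of `G` induced on `S` (kept on the same vertex type: edges of `G`
with both ends in `S`). -/
def restrictTo (G : SimpleGraph V) (S : Set V) : SimpleGraph V where
  Adj a b := G.Adj a b ∧ a ∈ S ∧ b ∈ S
  symm := ⟨fun a b h => ⟨h.1.symm, h.2.2, h.2.1⟩⟩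
  loopless := ⟨fun a h => G.loopless.irrefl a h.1⟩

/-- The vertex set of `H(u,v,x,y) = G[(V(G) \ N_G[V(P_uv ∪ P_xy) \ {u,v}]) ∪ {u,v}]`. -/
def Hverts (G : SimpleGraph V) {u v a b : V} (Puv : G.Walk u v) (Pxy : G.Walk a b) : Set V :=
  (Set.univ \ closedNbhd G ((suppSet Puv ∪ suppSet Pxy) \ {u, v})) ∪ {u, v}

/-- The graph `H(u,v,x,y)`. -/
def Hgraph (G : SimpleGraph V) {u v a b : V} (Puv : G.Walk u v) (Pxy : G.Walk a b) :
    SimpleGraph V :=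
  restrictTo G (Hverts G Puv Pxy)

/-- `G` is shallow. -/
def ShallowGraph (G : SimpleGraph V) : Prop :=
  ∃ (r : V) (c : G.Walk r r), IsShortestEvenHole G c ∧
    ∀ (u v : V) (P : G.Walk u v), WorstCShortcut G c P → CShallow G c P

/-- `G` is anti-shallow. -/
def AntiShallowGraph (G : SimpleGraph V) : Prop :=
  ∀ (r : V) (c : G.Walk r r), IsShortestEvenHole G c → ¬GoodHole G c →
    ∀ (u v : V) (P : G.Walk u v), WorstCShortcut G c P → ¬CShallow G c P

/-- The induced subgraph `G[S]` is a path with end-vertices `u` and `v`. -/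
def IsInducedPathOn (G : SimpleGraph V) (u v : V) (S : Set V) : Prop :=
  ∃ Q : G.Walk u v, Q.IsPath ∧ suppSet Q = S ∧
    ∀ a b : V, a ∈ S → b ∈ S → G.Adj a b → s(a, b) ∈ Q.edges

/-!
Let `a = ‖C1‖`. A shortest even hole `C` is isometric in `G` up to the length of a worst shortcut
`P`: a walk between two vertices of `C` shorter than both `‖P‖` and their distance along `C`
shrinks to a `C`-shortcut, which cannot be bad (it would be shorter than `P`) and cannot be good
(a good shortcut closes a shortest even hole, so it is at least as long as the distance along `C`).
Shallowness forces `‖P‖ = a - 1`: if `‖P‖ = a`, then `P ∪ C2` is an even hole of length `‖C‖`, and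
`P` is good. The interior of `C1` is an `xy`-path of length `a - 2`, and isometry shows that every
shortest `xy`-path `Pxy` has this length, misses `C2`, and is joined to `C2` only by the edges
`ux` and `yv`; otherwise some walk between two vertices of `C` would be too short. Hence
`u x Pxy y v C2` is a chordless cycle of length `‖C‖`.
-/

open Walk

namespace SimpleGraph.Walk

variable {G : SimpleGraph V}

lemma IsCycle.eq_or_eq_of_mem_edges {r w a b d : V} {c : G.Walk r r} (hc : c.IsCycle)
    (ha : s(w, a) ∈ c.edges) (hb : s(w, b) ∈ c.edges) (hd : s(w, d) ∈ c.edges) (hab : a ≠ b) :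
    d = a ∨ d = b := by
  obtain ⟨p, q, -, hN⟩ := Set.ncard_eq_two.1
    (hc.ncard_neighborSet_toSubgraph_eq_two (c.fst_mem_support_of_mem_edges ha))
  have mem : ∀ {z}, s(w, z) ∈ c.edges → z = p ∨ z = q := fun {z} h => by
    have : z ∈ c.toSubgraph.neighborSet w := (c.mem_edges_toSubgraph).2 h
    simpa [hN] using this
  grind

lemma IsCycle.eq_of_snd_eq {r s t : V} {c : G.Walk r r} (hc : c.IsCycle) {A B : G.Walk s t}
    (hA : IsPathOf G c A) (hB : IsPathOf G c B) (h : A.snd = B.snd) : A = B := by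
  induction A with
  | nil => exact ((isPath_iff_nil.1 hB.1).eq_nil).symm
  | @cons s w t hsw A' ih =>
    cases B with
    | nil => simpa using isPath_iff_nil.1 hA.1
    | @cons _ w' _ hsw' B' =>
      obtain rfl : w = w' := by simpa using h
      have hA' : IsPathOf G c A' := ⟨hA.1.of_cons, fun e he => hA.2 e (by simp [he])⟩
      have hB' : IsPathOf G c B' := ⟨hB.1.of_cons, fun e he => hB.2 e (by simp [he])⟩
      suffices A'.snd = B'.snd by rw [ih hA' hB' this]
      by_cases hwt : w = t
      · subst hwt
        rw [(isPath_iff_nil.1 hA'.1).eq_nil, (isPath_iff_nil.1 hB'.1).eq_nil]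
      have hA'nil : ¬A'.Nil := not_nil_of_ne hwt
      have hB'nil : ¬B'.Nil := not_nil_of_ne hwt
      have hsA : A'.snd ≠ s := fun h' => ((cons_isPath_iff _ _).1 hA.1).2
        (h' ▸ List.mem_of_mem_tail (A'.snd_mem_tail_support hA'nil))
      have hsB : B'.snd ≠ s := fun h' => ((cons_isPath_iff _ _).1 hB.1).2
        (h' ▸ List.mem_of_mem_tail (B'.snd_mem_tail_support hB'nil))
      have hws : s(w, s) ∈ c.edges := Sym2.eq_swap ▸ hA.2 _ (by simp)
      rcases hc.eq_or_eq_of_mem_edges hws (hA'.2 _ (A'.mk_start_snd_mem_edges hA'nil))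
        (hB'.2 _ (B'.mk_start_snd_mem_edges hB'nil)) hsA.symm with h' | h'
      · exact absurd h' hsB
      · exact h'.symm

lemma IsCycle.eq_or_eq_of_snd_ne {r s t : V} {c : G.Walk r r} (hc : c.IsCycle)
    {A B W : G.Walk s t} (hA : IsPathOf G c A) (hB : IsPathOf G c B) (hW : IsPathOf G c W)
    (hst : s ≠ t) (hAB : A.snd ≠ B.snd) : W = A ∨ W = B := by
  have hsA := hA.2 _ (A.mk_start_snd_mem_edges (not_nil_of_ne hst))
  have hsB := hB.2 _ (B.mk_start_snd_mem_edges (not_nil_of_ne hst))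
  have hsW := hW.2 _ (W.mk_start_snd_mem_edges (not_nil_of_ne hst))
  rcases hc.eq_or_eq_of_mem_edges hsA hsB hsW hAB with h | h
  · exact .inl (hc.eq_of_snd_eq hW hA h)
  · exact .inr (hc.eq_of_snd_eq hW hB h)

lemma IsCycle.exists_arcs {r s t : V} {c : G.Walk r r} (hc : c.IsCycle) (hs : s ∈ c.support)
    (ht : t ∈ c.support) (hst : s ≠ t) :
    ∃ A B : G.Walk s t, IsPathOf G c A ∧ IsPathOf G c B ∧ A.length + B.length = c.length ∧
      (∀ z ∈ A.support, z ∈ B.support → z = s ∨ z = t) ∧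
      ∀ W : G.Walk s t, IsPathOf G c W → W = A ∨ W = B := by
  classical
  set cw := c.rotate s hs
  have hcw : cw.IsCycle := hc.rotate hs
  have hcwe : ∀ e ∈ cw.edges, e ∈ c.edges := fun e => (c.rotate_edges s hs).perm.mem_iff.1
  have ht' : t ∈ cw.support := (c.mem_support_rotate_iff s hs).2 ht
  set A := cw.takeUntil t ht'
  set B' := cw.dropUntil t ht'
  have hspec : A.append B' = cw := take_spec cw ht'
  have hAnil : ¬A.Nil := not_nil_of_ne hst
  have hA : IsPathOf G c A :=
    ⟨hcw.isPath_takeUntil ht', fun e he => hcwe e (cw.edges_takeUntil_subset_edges ht' he)⟩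
  have hB : IsPathOf G c B'.reverse :=
    ⟨(IsCycle.isPath_of_append_right (q := B') hAnil (by rwa [hspec])).reverse, fun e he =>
      hcwe e (cw.edges_dropUntil_subset_edges ht' (by simpa using he))⟩
  refine ⟨A, B'.reverse, hA, hB, ?_, ?_, ?_⟩
  · rw [length_reverse, ← length_append, hspec, length_rotate]
  · intro z hzA hzB
    have hnd := hcw.support_nodup
    rw [← hspec, tail_support_append] at hnd
    rw [support_reverse, List.mem_reverse] at hzB
    rw [mem_support_iff] at hzA hzB
    by_contra! hz
    exact List.disjoint_of_nodup_append hnd (hzA.resolve_left hz.1) (hzB.resolve_left hz.2)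
  · have hAB : A.snd ≠ B'.reverse.snd := fun h => by
      have hdisj := hcw.isCircuit.isTrail.disjoint_edges_takeUntil_dropUntil ht'
      have hB' : B' = A.reverse := by rw [hc.eq_of_snd_eq hA hB h, reverse_reverse]
      have he := A.mk_start_snd_mem_edges hAnil
      have he' : s(s, A.snd) ∈ B'.edges := by rw [hB', edges_reverse, List.mem_reverse]; exact he
      exact hdisj he he'
    exact fun W hW => hc.eq_or_eq_of_snd_ne hA hB hW hst hAB

lemma IsPath.ne_of_ne {s t : V} {W₁ W₂ : G.Walk s t} (h₁ : W₁.IsPath) (h₂ : W₂.IsPath)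
    (hne : W₁ ≠ W₂) : s ≠ t := by
  rintro rfl
  exact hne (by rw [(isPath_iff_nil.1 h₁).eq_nil, (isPath_iff_nil.1 h₂).eq_nil])

lemma IsPath.exists_eq_cons_concat {u v x y : V} {p : G.Walk u v} (hp : p.IsPath)
    (hx : s(u, x) ∈ p.edges) (hy : s(v, y) ∈ p.edges) (hnadj : ¬G.Adj u v) :
    ∃ (hux : G.Adj u x) (q : G.Walk x y) (hyv : G.Adj y v), p = cons hux (q.concat hyv) := by
  have hnil : ¬p.Nil := fun h => by simp [edges_eq_nil.2 h] at hx
  obtain rfl := hp.eq_snd_of_mem_edges hx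
  have hv : v ≠ p.snd := fun h => hnadj (h ▸ p.adj_snd hnil)
  have hy' : s(v, y) ∈ p.tail.edges := by
    rw [← cons_tail_eq p hnil, edges_cons, List.mem_cons] at hy
    refine hy.resolve_left fun h => ?_
    rcases Sym2.eq_iff.1 h with ⟨rfl, -⟩ | ⟨h, -⟩
    · exact hnil (isPath_iff_nil.1 hp)
    · exact hv h
  obtain rfl := hp.tail.eq_penultimate_of_mem_edges hy'
  exact ⟨p.adj_snd hnil, p.tail.dropLast, p.tail.adj_penultimate (not_nil_of_ne hv.symm),
    by rw [concat_dropLast, cons_tail_eq _ hnil]⟩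

end SimpleGraph.Walk

section PathsOfACycle

variable {G : SimpleGraph V} {r s t : V} {c : G.Walk r r}

lemma suppSet_eq_setOf_mem_tail {w : G.Walk s s} (hw : ¬w.Nil) :
    suppSet w = {z | z ∈ w.support.tail} := by
  ext z
  refine ⟨fun hz => ?_, List.mem_of_mem_tail⟩
  rcases (mem_support_iff w).1 hz with rfl | hz
  · exact end_mem_tail_support hw
  · exact hz

lemma ncard_suppSet_union_le (p q : G.Walk s t) (hst : s ≠ t) :
    (suppSet p ∪ suppSet q).ncard ≤ p.length + q.length := by
  classical
  have hnil : ¬(p.append q.reverse).Nil := fun h => hst (nil_append_iff.1 h).1.eq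
  have hunion : suppSet p ∪ suppSet q = suppSet (p.append q.reverse) := by
    ext z
    simp [suppSet, mem_support_append_iff]
  rw [hunion, suppSet_eq_setOf_mem_tail hnil, ← List.coe_toFinset, Set.ncard_coe_finset]
  refine (List.toFinset_card_le _).trans ?_
  simp

lemma IsPathOf.mem_support {W : G.Walk s t} (hW : IsPathOf G c W) (hnil : ¬W.Nil) {z : V}
    (hz : z ∈ W.support) : z ∈ c.support := by
  obtain ⟨e, he, hze⟩ := (mem_support_iff_exists_mem_edges_of_not_nil hnil).1 hz
  exact c.mem_support_of_mem_edges (hW.2 e he) hze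

lemma IsPathOf.of_isSubwalk {x y : V} {p : G.Walk s t} {q : G.Walk x y} (hp : IsPathOf G c p)
    (h : q.IsSubwalk p) : IsPathOf G c q :=
  ⟨isPath_of_isSubwalk h hp.1, fun e he => hp.2 e (h.edges_subset he)⟩

lemma IsPathOf.cons {x : V} {p : G.Walk s t} (hp : IsPathOf G c p) (h : G.Adj x s)
    (he : s(x, s) ∈ c.edges) (hx : x ∉ p.support) : IsPathOf G c (cons h p) :=
  ⟨hp.1.cons hx, by simpa [he] using hp.2⟩

lemma IsPathOf.concat {y : V} {p : G.Walk s t} (hp : IsPathOf G c p) (h : G.Adj t y)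
    (he : s(t, y) ∈ c.edges) (hy : y ∉ p.support) : IsPathOf G c (p.concat h) :=
  ⟨hp.1.concat hy h, by simpa [edges_concat, he, or_imp, forall_and] using hp.2⟩

lemma cycleDist_le_length {W : G.Walk s t} (hW : IsPathOf G c W) :
    cycleDist G c s t ≤ W.length :=
  Nat.sInf_le ⟨W, hW, rfl⟩

lemma cycleDist_self : cycleDist G c s s = 0 :=
  Nat.eq_zero_of_le_zero (cycleDist_le_length (W := nil) ⟨.nil, by simp⟩)

end PathsOfACycle

namespace SimpleGraph.Walk

variable {G : SimpleGraph V} {r s t : V} {c : G.Walk r r}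

lemma IsCycle.ncard_suppSet {w : G.Walk s s} (hw : w.IsCycle) : (suppSet w).ncard = w.length := by
  classical
  rw [suppSet_eq_setOf_mem_tail hw.not_nil, ← List.coe_toFinset, Set.ncard_coe_finset,
    List.toFinset_card_of_nodup hw.support_nodup, List.length_tail, length_support,
    Nat.add_sub_cancel]

lemma IsCycle.length_add_length_of_ne (hc : c.IsCycle) {W₁ W₂ : G.Walk s t}
    (h₁ : IsPathOf G c W₁) (h₂ : IsPathOf G c W₂) (hne : W₁ ≠ W₂) :
    W₁.length + W₂.length = c.length := by
  have hst := h₁.1.ne_of_ne h₂.1 hne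
  obtain ⟨A, B, -, -, hlen, -, huniq⟩ := hc.exists_arcs (h₁.mem_support (not_nil_of_ne hst)
    W₁.start_mem_support) (h₁.mem_support (not_nil_of_ne hst) W₁.end_mem_support) hst
  rcases huniq W₁ h₁ with rfl | rfl <;> rcases huniq W₂ h₂ with rfl | rfl <;>
    first | exact absurd rfl hne | omega

lemma IsCycle.eq_or_eq_of_mem_support_of_ne (hc : c.IsCycle) {W₁ W₂ : G.Walk s t}
    (h₁ : IsPathOf G c W₁) (h₂ : IsPathOf G c W₂) (hne : W₁ ≠ W₂) {z : V}
    (hz₁ : z ∈ W₁.support) (hz₂ : z ∈ W₂.support) : z = s ∨ z = t := by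
  have hst := h₁.1.ne_of_ne h₂.1 hne
  obtain ⟨A, B, -, -, -, hAB, huniq⟩ := hc.exists_arcs (h₁.mem_support (not_nil_of_ne hst)
    W₁.start_mem_support) (h₁.mem_support (not_nil_of_ne hst) W₁.end_mem_support) hst
  rcases huniq W₁ h₁ with rfl | rfl <;> rcases huniq W₂ h₂ with rfl | rfl
  · exact absurd rfl hne
  · exact hAB z hz₁ hz₂
  · exact hAB z hz₂ hz₁
  · exact absurd rfl hne

lemma IsCycle.cycleDist_eq_min (hc : c.IsCycle) {W : G.Walk s t} (hW : IsPathOf G c W)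
    (hst : s ≠ t) : cycleDist G c s t = min W.length (c.length - W.length) := by
  obtain ⟨A, B, hA, hB, hlen, -, huniq⟩ := hc.exists_arcs (hW.mem_support (not_nil_of_ne hst)
    W.start_mem_support) (hW.mem_support (not_nil_of_ne hst) W.end_mem_support) hst
  apply le_antisymm
  · refine le_min (cycleDist_le_length hW) ?_
    rcases huniq W hW with rfl | rfl
    · exact (cycleDist_le_length hB).trans (by omega)
    · exact (cycleDist_le_length hA).trans (by omega)
  · refine le_csInf ⟨_, W, hW, rfl⟩ ?_
    rintro _ ⟨D, hD, rfl⟩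
    rcases huniq D hD with rfl | rfl <;> rcases huniq W hW with rfl | rfl <;> omega

end SimpleGraph.Walk

section ArcPair

variable {G : SimpleGraph V} {r u v : V} {c : G.Walk r r} {C1 C2 : G.Walk u v}

lemma ArcPair.ne (harc : ArcPair G c C1 C2) (hc : c.IsCycle) : C1 ≠ C2 := by
  rintro rfl
  have hsub : c.edges ⊆ C1.edges := fun e he => (harc.2.2.2 e he).elim id id
  have := (hc.edges_nodup.subperm hsub).length_le
  have := hc.three_le_length
  have := harc.2.2.1
  simp only [length_edges] at *
  omega

lemma ArcPair.eq_or_eq_of_mem_support (harc : ArcPair G c C1 C2) (hc : c.IsCycle) {z : V}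
    (hz₁ : z ∈ C1.support) (hz₂ : z ∈ C2.support) : z = u ∨ z = v :=
  hc.eq_or_eq_of_mem_support_of_ne harc.1 harc.2.1 (harc.ne hc) hz₁ hz₂

lemma ArcPair.cycleDist_eq (harc : ArcPair G c C1 C2) (hc : c.IsCycle)
    (hle : C1.length ≤ C2.length) (huv : u ≠ v) : cycleDist G c u v = C1.length := by
  rw [hc.cycleDist_eq_min harc.1 huv]
  have := harc.2.2.1
  omega

lemma ArcPair.isChordless_right (harc : ArcPair G c C1 C2) (hc : IsInducedCycle G c)
    (huv : u ≠ v) (hnadj : ¬G.Adj u v) : C2.IsChordless := by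
  rw [isChordless_iff_forall_mem_edges]
  intro a b ha hb hab
  have hmem : ∀ {z}, z ∈ C2.support → z ∈ c.support := harc.2.1.mem_support (not_nil_of_ne huv)
  refine (harc.2.2.2 _ (hc.2 a b (hmem ha) (hmem hb) hab)).resolve_left fun h => ?_
  rcases harc.eq_or_eq_of_mem_support hc.1 (C1.fst_mem_support_of_mem_edges h) ha with rfl | rfl <;>
    rcases harc.eq_or_eq_of_mem_support hc.1 (C1.snd_mem_support_of_mem_edges h) hb with rfl | rfl
  all_goals first | exact hab.ne rfl | exact hnadj hab | exact hnadj hab.symm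

end ArcPair

section Holes

variable {G : SimpleGraph V} {r s t : V} {c : G.Walk r r}

lemma IsShortestEvenHole.of_length_eq {w : G.Walk s s} (hC : IsShortestEvenHole G c)
    (hw : IsInducedCycle G w) (hlen : w.length = c.length) : IsShortestEvenHole G w :=
  ⟨⟨⟨hw, hlen ▸ hC.1.1.2⟩, hlen ▸ hC.1.2⟩, fun y w' h => hlen ▸ hC.2 y w' h⟩

lemma IsInducedCycle.isPathOf {p : G.Walk s t} (hc : IsInducedCycle G c) (hp : p.IsPath)
    (hsub : ∀ z ∈ p.support, z ∈ c.support) : IsPathOf G c p :=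
  ⟨hp, fun e he => Sym2.ind (fun a b he => hc.2 a b (hsub a (p.fst_mem_support_of_mem_edges he))
    (hsub b (p.snd_mem_support_of_mem_edges he)) (p.adj_of_mem_edges he)) e he⟩

lemma IsInducedCycle.cycleDist_le_one (hc : IsInducedCycle G c) (hs : s ∈ c.support)
    (ht : t ∈ c.support) (hadj : G.Adj s t) : cycleDist G c s t ≤ 1 :=
  (cycleDist_le_length (W := hadj.toWalk)
    ⟨hadj.isPath_toWalk, by simpa using hc.2 s t hs ht hadj⟩).trans hadj.length_toWalk.le

lemma IsShortestPath.isChordless {P : G.Walk s t} (hP : IsShortestPath G P) : P.IsChordless := by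
  classical
  have key : ∀ a b (ha : a ∈ P.support) (hb : b ∈ P.support), G.Adj a b →
      (P.takeUntil a ha).length < (P.takeUntil b hb).length → s(a, b) ∈ P.edges := by
    intro a b ha hb hab hlt
    have hshort := hP.2 ((P.takeUntil a ha).append (cons hab (P.dropUntil b hb)))
    have hsplit := congrArg length (P.take_spec hb)
    simp only [length_append, length_cons] at hshort hsplit
    rw [mk_mem_edges_iff_exists]
    refine ⟨(P.takeUntil a ha).length, by omega, ?_⟩
    rw [show (P.takeUntil a ha).length + 1 = (P.takeUntil b hb).length by omega,
      getVert_length_takeUntil, getVert_length_takeUntil]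
  rw [isChordless_iff_forall_mem_edges]
  intro a b ha hb hab
  rcases lt_trichotomy (P.takeUntil a ha).length (P.takeUntil b hb).length with h | h | h
  · exact key a b ha hb hab h
  · exact absurd (by rw [← getVert_length_takeUntil ha, h, getVert_length_takeUntil hb]) hab.ne
  · exact Sym2.eq_swap ▸ key b a hb ha hab.symm h

variable {u v x y : V} (hux : G.Adj u x) (hyv : G.Adj y v) (Q : G.Walk x y) (R : G.Walk u v)

lemma mem_support_cons_append {z : V} :
    z ∈ (cons hux (Q.append (cons hyv R.reverse))).support ↔ z ∈ Q.support ∨ z ∈ R.support := by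
  simp only [support_cons, List.mem_cons, mem_support_append_iff, support_reverse,
    List.mem_reverse]
  refine ⟨?_, by tauto⟩
  rintro (rfl | h | rfl | h)
  exacts [.inr R.start_mem_support, .inl h, .inl Q.end_mem_support, .inr h]

lemma isInducedCycle_cons_append (huv : u ≠ v) (hQ : Q.IsPath) (hR : R.IsPath)
    (hQc : Q.IsChordless) (hRc : R.IsChordless) (hdisj : ∀ z ∈ Q.support, z ∉ R.support)
    (hcross : ∀ a ∈ Q.support, ∀ b ∈ R.support, G.Adj a b → a = x ∧ b = u ∨ a = y ∧ b = v) :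
    IsInducedCycle G (cons hux (Q.append (cons hyv R.reverse))) := by
  have hxR : x ∉ R.support := hdisj x Q.start_mem_support
  have hyR : y ∉ R.support := hdisj y Q.end_mem_support
  have huQ : u ∉ Q.support := fun h => hdisj u h R.start_mem_support
  refine ⟨(cons_isCycle_iff _ _).2 ⟨?_, ?_⟩, ?_⟩
  · rw [isPath_def, support_append, support_cons, List.tail_cons, support_reverse,
      List.nodup_append]
    exact ⟨hQ.support_nodup, List.nodup_reverse.2 hR.support_nodup,
      fun a ha b hb => by rintro rfl; exact hdisj a ha (List.mem_reverse.1 hb)⟩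
  · simp only [edges_append, edges_cons, edges_reverse, List.mem_append, List.mem_cons,
      List.mem_reverse, not_or]
    refine ⟨fun h => huQ (Q.fst_mem_support_of_mem_edges h), fun h => ?_,
      fun h => hxR (R.snd_mem_support_of_mem_edges h)⟩
    rcases Sym2.eq_iff.1 h with ⟨rfl, -⟩ | ⟨rfl, -⟩
    · exact hyR R.start_mem_support
    · exact huv rfl
  · intro a b ha hb hab
    simp only [edges_cons, edges_append, edges_reverse, List.mem_cons, List.mem_append,
      List.mem_reverse]
    rcases (mem_support_cons_append hux hyv Q R).1 ha with ha | ha <;>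
      rcases (mem_support_cons_append hux hyv Q R).1 hb with hb | hb
    · exact .inr (.inl (hQc.mem_edges ha hb hab))
    · rcases hcross a ha b hb hab with ⟨rfl, rfl⟩ | ⟨rfl, rfl⟩
      · exact .inl Sym2.eq_swap
      · exact .inr (.inr (.inl rfl))
    · rcases hcross b hb a ha hab.symm with ⟨rfl, rfl⟩ | ⟨rfl, rfl⟩
      · exact .inl rfl
      · exact .inr (.inr (.inl Sym2.eq_swap))
    · exact .inr (.inr (.inr (hRc.mem_edges ha hb hab)))

end Holes

def IsIsometricUpTo (G : SimpleGraph V) {r : V} (c : G.Walk r r) (k : ℕ) : Prop :=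
  ∀ s t : V, s ∈ c.support → t ∈ c.support → ∀ R : G.Walk s t,
    min (cycleDist G c s t) k ≤ R.length

section Shortcuts

variable {G : SimpleGraph V} {r s t u v : V} {c : G.Walk r r}

lemma CGood.cycleDist_le_length (hC : IsShortestEvenHole G c) {R : G.Walk s t} (hst : s ≠ t)
    (hgood : CGood G c R) : cycleDist G c s t ≤ R.length := by
  obtain ⟨Q, hQ, r', w, hw, hsupp⟩ := hgood
  have hmin : c.length ≤ w.length := hC.2 r' w hw.1
  have hw_le : w.length ≤ R.length + Q.length := by
    rw [← hw.1.1.1.1.ncard_suppSet, hsupp]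
    exact ncard_suppSet_union_le R Q hst
  have hQ_dist := hC.1.1.1.1.cycleDist_eq_min hQ hst
  omega

lemma WorstCShortcut.isIsometricUpTo (hC : IsShortestEvenHole G c) {P : G.Walk u v}
    (hworst : WorstCShortcut G c P) : IsIsometricUpTo G c P.length := by
  classical
  intro s t hs ht R
  by_contra! hlt
  rw [lt_min_iff] at hlt
  have hbypass : R.bypass.length ≤ R.length := R.length_bypass_le_length
  have hst : s ≠ t := by
    rintro rfl
    rw [cycleDist_self] at hlt
    omega
  have hnadj : ¬G.Adj s t := fun h => by
    have := hC.1.1.1.cycleDist_le_one hs ht h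
    exact hst (eq_of_length_eq_zero (p := R) (by omega))
  have h2 : 2 ≤ R.bypass.length := by
    by_contra! h
    interval_cases hR : R.bypass.length
    · exact hst (eq_of_length_eq_zero hR)
    · exact hnadj (adj_of_length_eq_one hR)
  have hshort : CShortcut G c R.bypass := ⟨h2, by omega, by have := hworst.2.1.2.2; omega⟩
  by_cases hgood : CGood G c R.bypass
  · have := hgood.cycleDist_le_length hC hst
    omega
  · rcases hworst.2.2.2 s t R.bypass ⟨R.bypass_isPath, hst, hnadj, hs, ht⟩ hshort hgood with
      h | ⟨h, -⟩ <;> omega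

lemma WorstCShortcut.length_add_one_eq (hC : IsShortestEvenHole G c) {P C1 C2 : G.Walk u v}
    (hworst : WorstCShortcut G c P) (hshallow : CShallow G c P) (harc : ArcPair G c C1 C2)
    (hle : C1.length ≤ C2.length) : P.length + 1 = C1.length := by
  obtain ⟨⟨hP, huv, -, -, -⟩, ⟨-, hPd, hP4⟩, hbad, -⟩ := hworst
  have hd := harc.cycleDist_eq hC.1.1.1.1 hle huv
  have hlen := harc.2.2.1
  obtain ⟨r', w, ⟨hw, -⟩, hsupp⟩ := hshallow.2 C1 C2 harc hle
  have hsub : ∀ {z}, z ∈ suppSet P ∪ suppSet C2 → z ∈ w.support := fun hz => by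
    rwa [← hsupp] at hz
  have hPw := hw.isPathOf hP fun z hz => hsub (.inl hz)
  have hC2w := hw.isPathOf harc.2.1.1 fun z hz => hsub (.inr hz)
  have hne : P ≠ C2 := by
    rintro rfl
    omega
  have hwlen := hw.1.length_add_length_of_ne hPw hC2w hne
  have hP_ge := hshallow.1
  by_contra hne'
  refine hbad ⟨C2, harc.2.1, r', w, hC.of_length_eq hw ?_, hsupp⟩
  omega

end Shortcuts

section ShortestPathBetweenNeighbours

variable {G : SimpleGraph V} {r u v x y : V} {c : G.Walk r r} {hux : G.Adj u x}
  {hyv : G.Adj y v} {mid : G.Walk x y} {C2 : G.Walk u v}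

lemma ArcPair.mem_support_of_cons_concat (harc : ArcPair G c (cons hux (mid.concat hyv)) C2)
    {z : V} (hz : z ∈ (cons hux (mid.concat hyv)).support) : z ∈ c.support :=
  harc.1.mem_support not_nil_cons hz

lemma ArcPair.cycleDist_cons_concat (harc : ArcPair G c (cons hux (mid.concat hyv)) C2)
    (hc : c.IsCycle) (hle : mid.length + 2 ≤ C2.length) :
    cycleDist G c x y = mid.length ∧ cycleDist G c u y = mid.length + 1 ∧
      cycleDist G c x v = mid.length + 1 := by
  have hlen := harc.2.2.1
  simp only [length_cons, length_concat] at hlen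
  obtain ⟨hconcat, huy⟩ := (cons_isPath_iff _ _).1 harc.1.1
  obtain ⟨-, hvx⟩ := (concat_isPath_iff _).1 hconcat
  have hmid : IsPathOf G c mid :=
    harc.1.of_isSubwalk ((isSubwalk_concat mid hyv).trans (isSubwalk_cons _ hux))
  have hleft : IsPathOf G c (cons hux mid) := by
    refine harc.1.of_isSubwalk ?_
    rw [← concat_cons]
    exact isSubwalk_concat _ _
  have hright : IsPathOf G c (mid.concat hyv) := harc.1.of_isSubwalk (isSubwalk_cons _ hux)
  have h₁ := hc.cycleDist_eq_min hleft (by rintro rfl; simp at huy)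
  have h₂ := hc.cycleDist_eq_min hright (by rintro rfl; simp at hvx)
  simp only [length_cons, length_concat] at h₁ h₂
  refine ⟨?_, by omega, by omega⟩
  rcases eq_or_ne x y with rfl | hxy
  · rw [(isPath_iff_nil.1 hmid.1).eq_nil, length_nil, cycleDist_self]
  · rw [hc.cycleDist_eq_min hmid hxy]
    omega

lemma ArcPair.cycleDist_of_mem_support_right (harc : ArcPair G c (cons hux (mid.concat hyv)) C2)
    (hc : c.IsCycle) (hle : mid.length + 2 ≤ C2.length) {w : V} (hw : w ∈ C2.support)
    (hwu : w ≠ u) (hwv : w ≠ v) :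
    2 ≤ cycleDist G c x w ∧ 2 ≤ cycleDist G c w y ∧
      mid.length + 3 ≤ cycleDist G c x w + cycleDist G c w y := by
  classical
  have hlen := harc.2.2.1
  simp only [length_cons, length_concat] at hlen
  obtain ⟨hconcat, huy⟩ := (cons_isPath_iff _ _).1 harc.1.1
  obtain ⟨-, hvx⟩ := (concat_isPath_iff _).1 hconcat
  have hxC2 : x ∉ C2.support := fun h => by
    rcases harc.eq_or_eq_of_mem_support hc (by simp) h with rfl | rfl
    · exact hux.ne rfl
    · exact hvx mid.start_mem_support
  have hyC2 : y ∉ C2.support := fun h => by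
    rcases harc.eq_or_eq_of_mem_support hc (by simp) h with rfl | rfl
    · exact huy (by simp)
    · exact hyv.ne rfl
  have hxw : IsPathOf G c (cons hux.symm (C2.takeUntil w hw)) :=
    (harc.2.1.of_isSubwalk (C2.isSubwalk_takeUntil hw)).cons hux.symm
      (Sym2.eq_swap ▸ harc.1.2 _ (by simp))
      fun h => hxC2 (C2.support_takeUntil_subset_support hw h)
  have hwy : IsPathOf G c ((C2.dropUntil w hw).concat hyv.symm) :=
    (harc.2.1.of_isSubwalk (C2.isSubwalk_dropUntil hw)).concat hyv.symm
      (Sym2.eq_swap ▸ harc.1.2 _ (by simp))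
      fun h => hyC2 (C2.support_dropUntil_subset_support hw h)
  have h₁ := hc.cycleDist_eq_min hxw (by rintro rfl; exact hxC2 hw)
  have h₂ := hc.cycleDist_eq_min hwy (by rintro rfl; exact hyC2 hw)
  have hsplit := congrArg length (C2.take_spec hw)
  have htake := C2.length_takeUntil_lt_length hw hwv
  have hdrop := C2.length_dropUntil_lt_length hw hwu
  simp only [length_cons, length_concat, length_append] at h₁ h₂ hsplit
  omega

variable {Pxy : G.Walk x y}

lemma ArcPair.length_eq_of_isShortestPath (harc : ArcPair G c (cons hux (mid.concat hyv)) C2)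
    (hc : c.IsCycle) (hle : mid.length + 2 ≤ C2.length)
    (hiso : IsIsometricUpTo G c (mid.length + 1)) (hPxy : IsShortestPath G Pxy) :
    Pxy.length = mid.length := by
  have := hiso x y (harc.mem_support_of_cons_concat (by simp))
    (harc.mem_support_of_cons_concat (by simp)) Pxy
  have := (harc.cycleDist_cons_concat hc hle).1
  have := hPxy.2 mid
  omega

lemma ArcPair.two_le_length_of_mem_support_left
    (harc : ArcPair G c (cons hux (mid.concat hyv)) C2) (hc : c.IsCycle)
    (hle : mid.length + 2 ≤ C2.length) (hiso : IsIsometricUpTo G c (mid.length + 1))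
    (hPxy : Pxy.length ≤ mid.length) {z : V} (hz : z ∈ Pxy.support) (hzx : z ≠ x)
    (W : G.Walk u z) : 2 ≤ W.length := by
  classical
  have hd := (harc.cycleDist_cons_concat hc hle).2.1
  have := hiso u y (harc.mem_support_of_cons_concat (by simp))
    (harc.mem_support_of_cons_concat (by simp)) (W.append (Pxy.dropUntil z hz))
  have := Pxy.length_dropUntil_lt_length hz hzx
  rw [length_append] at *
  omega

lemma ArcPair.two_le_length_of_mem_support_right
    (harc : ArcPair G c (cons hux (mid.concat hyv)) C2) (hc : c.IsCycle)
    (hle : mid.length + 2 ≤ C2.length) (hiso : IsIsometricUpTo G c (mid.length + 1))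
    (hPxy : Pxy.length ≤ mid.length) {z : V} (hz : z ∈ Pxy.support) (hzy : z ≠ y)
    (W : G.Walk z v) : 2 ≤ W.length := by
  classical
  have hd := (harc.cycleDist_cons_concat hc hle).2.2
  have := hiso x v (harc.mem_support_of_cons_concat (by simp))
    (harc.mem_support_of_cons_concat (by simp)) ((Pxy.takeUntil z hz).append W)
  have := Pxy.length_takeUntil_lt_length hz hzy
  rw [length_append] at *
  omega

lemma ArcPair.lt_length_of_mem_support_right
    (harc : ArcPair G c (cons hux (mid.concat hyv)) C2) (hc : c.IsCycle)
    (hle : mid.length + 2 ≤ C2.length) (hiso : IsIsometricUpTo G c (mid.length + 1))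
    (hmid : 0 < mid.length) {R : G.Walk x y} {w : V} (hwR : w ∈ R.support)
    (hw : w ∈ C2.support) (hwu : w ≠ u) (hwv : w ≠ v) : mid.length + 2 < R.length := by
  classical
  have hd := harc.cycleDist_of_mem_support_right hc hle hw hwu hwv
  have hwc : w ∈ c.support :=
    harc.2.1.mem_support (fun h => hwu (by simpa [nil_iff_support_eq.1 h] using hw)) hw
  have h₁ := hiso x w (harc.mem_support_of_cons_concat (by simp)) hwc (R.takeUntil w hwR)
  have h₂ := hiso w y hwc (harc.mem_support_of_cons_concat (by simp)) (R.dropUntil w hwR)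
  have hsplit := congrArg length (R.take_spec hwR)
  rw [length_append] at hsplit
  omega

lemma ArcPair.notMem_support_right (harc : ArcPair G c (cons hux (mid.concat hyv)) C2)
    (hc : c.IsCycle) (hle : mid.length + 2 ≤ C2.length)
    (hiso : IsIsometricUpTo G c (mid.length + 1)) (hmid : 0 < mid.length)
    (hPxy : Pxy.length ≤ mid.length) : ∀ z ∈ Pxy.support, z ∉ C2.support := by
  intro z hz hzC2
  by_cases hzu : z = u
  · subst hzu
    have := harc.two_le_length_of_mem_support_left hc hle hiso hPxy hz hux.ne nil
    simp at this
  by_cases hzv : z = v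
  · subst hzv
    have := harc.two_le_length_of_mem_support_right hc hle hiso hPxy hz hyv.ne.symm nil
    simp at this
  have := harc.lt_length_of_mem_support_right hc hle hiso hmid hz hzC2 hzu hzv
  omega

lemma ArcPair.eq_and_eq_of_adj (harc : ArcPair G c (cons hux (mid.concat hyv)) C2)
    (hc : c.IsCycle) (hle : mid.length + 2 ≤ C2.length)
    (hiso : IsIsometricUpTo G c (mid.length + 1)) (hmid : 0 < mid.length)
    (hPxy : Pxy.length ≤ mid.length) :
    ∀ a ∈ Pxy.support, ∀ b ∈ C2.support, G.Adj a b → a = x ∧ b = u ∨ a = y ∧ b = v := by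
  classical
  intro a ha b hb hab
  by_cases hbu : b = u
  · subst hbu
    refine .inl ⟨by_contra fun hax => ?_, rfl⟩
    have := harc.two_le_length_of_mem_support_left hc hle hiso hPxy ha hax hab.symm.toWalk
    simp at this
  by_cases hbv : b = v
  · subst hbv
    refine .inr ⟨by_contra fun hay => ?_, rfl⟩
    have := harc.two_le_length_of_mem_support_right hc hle hiso hPxy ha hay hab.toWalk
    simp at this
  have := harc.lt_length_of_mem_support_right hc hle hiso hmid
    (R := ((Pxy.takeUntil a ha).concat hab).append (cons hab.symm (Pxy.dropUntil a ha)))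
    (by simp) hb hbu hbv
  have hsplit := congrArg length (Pxy.take_spec ha)
  simp only [length_append, length_concat, length_cons] at this hsplit
  omega

end ShortestPathBetweenNeighbours

theorem stmt8 (G : SimpleGraph V) {r u v : V} (c : G.Walk r r)
    (hC : IsShortestEvenHole G c) (P : G.Walk u v)
    (hworst : WorstCShortcut G c P) (hshallow : CShallow G c P)
    (C1 C2 : G.Walk u v) (harc : ArcPair G c C1 C2) (hle : C1.length ≤ C2.length)
    (x y : V) (hx : s(u, x) ∈ C1.edges) (hy : s(v, y) ∈ C1.edges) :
    ∀ Pxy : G.Walk x y, IsShortestPath G Pxy →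
      Pxy.length + 2 = C1.length ∧ IsShortestEvenHoleOn G (suppSet Pxy ∪ suppSet C2) := by
  intro Pxy hPxy
  have hc : IsInducedCycle G c := hC.1.1.1
  have hlenP := hworst.length_add_one_eq hC hshallow harc hle
  have hiso := hworst.isIsometricUpTo hC
  obtain ⟨⟨-, huv, hnadj, -, -⟩, ⟨hP2, -, -⟩, -, -⟩ := hworst
  obtain ⟨hux, mid, hyv, rfl⟩ := harc.1.1.exists_eq_cons_concat hx hy hnadj
  simp only [length_cons, length_concat] at hle hlenP ⊢
  replace hle : mid.length + 2 ≤ C2.length := hle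
  rw [show P.length = mid.length + 1 by omega] at hiso
  have hmid : 0 < mid.length := by omega
  have hlen := harc.length_eq_of_isShortestPath hc.1 hle hiso hPxy
  have hD := isInducedCycle_cons_append hux hyv Pxy C2 huv hPxy.1 harc.2.1.1 hPxy.isChordless
    (harc.isChordless_right hc huv hnadj) (harc.notMem_support_right hc.1 hle hiso hmid hlen.le)
    (harc.eq_and_eq_of_adj hc.1 hle hiso hmid hlen.le)
  refine ⟨by omega, u, _, hC.of_length_eq hD ?_, Set.ext fun z => mem_support_cons_append ..⟩
  have := harc.2.2.1
  simp only [length_cons, length_append, length_reverse, length_concat] at this ⊢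
  omega
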